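/- arXiv:0908.4053 — 3 statements merged into one kernel-verified Lean document; each statement's English description precedes it below -/
import Mathlib

section
/- For every positive integer p and every integer k with 1 ≤ k ≤ p, the sum over m from 1 to p of (-1)^m (1/m) · C(p, m+k) equals -C(p,k) · (H_p - H_k), where H_n denotes the n-th harmonic number and C(p, m+k) = 0 when m + k > p. -/
/-!
Write `S p k` for the left-hand side. By Pascal's rule `S (p+1) (k+1) = S p k + S p (k+1)`, and
the right-hand side satisfies the same recurrence because `C(p+1, k+1)/(p+1) = C(p, k)/(k+1)`.
It remains to match the boundary values: `S 0 k = 0`, and `S p 0 = -H_p`, whose increment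
`S (p+1) 0 - S p 0 = ∑ (-1)^m C(p+1, m)/(p+1) = -1/(p+1)` comes again from Pascal's rule and the
vanishing of the alternating sum of binomial coefficients.
-/

open Finset

theorem sum_Icc_one_neg_one_pow_mul_choose {R : Type*} [Ring R] {n : ℕ} (hn : n ≠ 0) :
    ∑ m ∈ Icc 1 n, (-1 : R) ^ m * (n.choose m : R) = -1 := by
  have h : ∑ m ∈ range (n + 1), ((-1) ^ m * n.choose m : ℤ) = 0 :=
    Int.alternating_sum_range_choose_of_ne hn
  rw [Nat.range_succ_eq_Icc_zero, ← insert_Icc_add_one_left_eq_Icc n.zero_le,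
    sum_insert (by simp)] at h
  have h' := congrArg (Int.cast : ℤ → R) h
  push_cast at h'
  simpa using eq_neg_of_add_eq_zero_right h'

theorem sum_Icc_one_succ_mul_choose_add {R : Type*} [Semiring R] (f : ℕ → R) (p k : ℕ) :
    ∑ m ∈ Icc 1 (p + 1), f m * (p.choose (m + k) : R) =
      ∑ m ∈ Icc 1 p, f m * (p.choose (m + k) : R) := by
  rw [sum_Icc_succ_top (by omega), Nat.choose_eq_zero_of_lt (by omega), Nat.cast_zero, mul_zero,
    add_zero]

theorem one_div_mul_choose_pred {K : Type*} [Field K] [CharZero K] {m : ℕ} (hm : 0 < m) (p : ℕ) :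
    1 / (m : K) * (p.choose (m - 1) : K) = ((p + 1).choose m : K) / (p + 1) := by
  obtain ⟨j, rfl⟩ : ∃ j, m = j + 1 := ⟨m - 1, by omega⟩
  have h := congrArg (Nat.cast : ℕ → K) (Nat.add_one_mul_choose_eq p j)
  push_cast at h ⊢
  field_simp
  linear_combination h

theorem choose_mul_harmonic_sub_succ_succ (p k : ℕ) :
    ((p + 1).choose (k + 1) : ℚ) * (harmonic (p + 1) - harmonic (k + 1)) =
      (p.choose k : ℚ) * (harmonic p - harmonic k) +
        (p.choose (k + 1) : ℚ) * (harmonic p - harmonic (k + 1)) := by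
  have h := one_div_mul_choose_pred (K := ℚ) (m := k + 1) (by omega) p
  rw [Nat.choose_succ_succ'] at h ⊢
  rw [harmonic_succ, harmonic_succ k]
  push_cast at h ⊢
  linear_combination -h

def alternatingChooseSum (p k : ℕ) : ℚ :=
  ∑ m ∈ Icc 1 p, (-1 : ℚ) ^ m * (1 / (m : ℚ)) * (p.choose (m + k) : ℚ)

theorem alternatingChooseSum_succ_succ (p k : ℕ) :
    alternatingChooseSum (p + 1) (k + 1) =
      alternatingChooseSum p k + alternatingChooseSum p (k + 1) := by
  have pascal (m : ℕ) :
      ((p + 1).choose (m + (k + 1)) : ℚ) = p.choose (m + k) + p.choose (m + (k + 1)) := by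
    rw [← add_assoc, Nat.choose_succ_succ', Nat.cast_add]
  simp only [alternatingChooseSum, pascal, mul_add, sum_add_distrib,
    sum_Icc_one_succ_mul_choose_add]

theorem alternatingChooseSum_zero_right (p : ℕ) : alternatingChooseSum p 0 = -harmonic p := by
  induction p with
  | zero => simp [alternatingChooseSum]
  | succ p ih =>
    have pascal : ∀ m ∈ Icc 1 (p + 1),
        (-1 : ℚ) ^ m * (1 / (m : ℚ)) * ((p + 1).choose (m + 0) : ℚ) =
          (-1 : ℚ) ^ m * ((p + 1).choose m / (p + 1) : ℚ) +
            (-1 : ℚ) ^ m * (1 / (m : ℚ)) * (p.choose (m + 0) : ℚ) := by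
      intro m hm
      have hm : 0 < m := (mem_Icc.mp hm).1
      rw [← one_div_mul_choose_pred hm, add_zero, Nat.choose_succ_left _ _ hm]
      push_cast
      ring
    have increment :
        ∑ m ∈ Icc 1 (p + 1), (-1 : ℚ) ^ m * ((p + 1).choose m / (p + 1) : ℚ) = -1 / (p + 1) := by
      simp_rw [← mul_div_assoc]
      rw [← sum_div, sum_Icc_one_neg_one_pow_mul_choose p.succ_ne_zero]
    rw [alternatingChooseSum, sum_congr rfl pascal, sum_add_distrib, increment,
      sum_Icc_one_succ_mul_choose_add, ← alternatingChooseSum, ih, harmonic_succ]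
    push_cast
    ring

theorem alternatingChooseSum_eq (p k : ℕ) :
    alternatingChooseSum p k = -(p.choose k : ℚ) * (harmonic p - harmonic k) := by
  induction p generalizing k with
  | zero => cases k <;> simp [alternatingChooseSum]
  | succ p ih =>
    cases k with
    | zero => simp [alternatingChooseSum_zero_right]
    | succ k =>
      rw [alternatingChooseSum_succ_succ, ih, ih]
      linear_combination choose_mul_harmonic_sub_succ_succ p k

theorem stmt3_general (p k : ℕ) :
    ∑ m ∈ Finset.Icc 1 p, (-1 : ℚ)^m * (1 / (m : ℚ)) * (p.choose (m + k) : ℚ)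
      = - (p.choose k : ℚ) * (harmonic p - harmonic k) :=
  alternatingChooseSum_eq p k

theorem stmt3 (p k : ℕ) (hp : 0 < p) (hk1 : 1 ≤ k) (hkp : k ≤ p) :
    ∑ m ∈ Finset.Icc 1 p, (-1 : ℚ)^m * (1 / (m : ℚ)) * (p.choose (m + k) : ℚ)
      = - (p.choose k : ℚ) * (harmonic p - harmonic k) :=
  stmt3_general p k
end

section
/- For every odd positive integer p, the double sum ∑_{m=1}^{p} ∑_{k=0}^{p} (-1)^{m+k} (1/m) · C(p,k)^2 · C(p, m+k) equals ∑_{k=0}^p (-1)^k C(p,k)^3 H_k, where C(p, m+k) = 0 when m+k > p and H_k is the k-th harmonic number. -/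
/-!
Exchanging the two sums, the inner sum over `m` is `C_k = ∑_{m=1}^{p} (-1)^m / m · C(p, m+k)`.
Pascal's rule shows that `C_k`, as a function of `p`, satisfies the same recursion as
`-C(p,k) (H_p - H_k)` (with the absorption identity `C(n,k)/(k+1) = C(n+1,k+1)/(n+1)` supplying the
extra harmonic terms), so the two agree by induction on `p`. The `H_p` part of the sum is then
`H_p ∑_k (-1)^k C(p,k)^3`, which vanishes for odd `p` because `k ↦ p - k` flips the sign.
-/

open Finset

/-- The paper's `C_k`, for `p = n`. -/
def altChooseSum (n k : ℕ) : ℚ :=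
  ∑ m ∈ Icc 1 n, (-1) ^ m / m * (n.choose (m + k) : ℚ)

lemma altChooseSum_eq_sum_range (n k : ℕ) :
    altChooseSum n k =
      ∑ i ∈ range n, (-1) ^ (i + 1) / (i + 1 : ℚ) * (n.choose (i + 1 + k) : ℚ) := by
  rw [altChooseSum, ← Ico_add_one_right_eq_Icc, sum_Ico_eq_sum_range, Nat.add_sub_cancel]
  refine sum_congr rfl fun i _ => ?_
  rw [add_comm 1 i]
  push_cast
  rfl

lemma altChooseSum_succ (n k : ℕ) :
    altChooseSum (n + 1) k = altChooseSum n k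
      + ∑ i ∈ range (n + 1), (-1) ^ (i + 1) / (i + 1 : ℚ) * (n.choose (i + k) : ℚ) := by
  have hlast : n.choose (n + 1 + k) = 0 := Nat.choose_eq_zero_of_lt (by omega)
  have hextend : ∑ i ∈ range n, (-1) ^ (i + 1) / (i + 1 : ℚ) * (n.choose (i + 1 + k) : ℚ)
      = ∑ i ∈ range (n + 1), (-1) ^ (i + 1) / (i + 1 : ℚ) * (n.choose (i + 1 + k) : ℚ) := by
    rw [sum_range_succ, hlast, Nat.cast_zero, mul_zero, add_zero]
  rw [altChooseSum_eq_sum_range, altChooseSum_eq_sum_range, hextend, ← sum_add_distrib]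
  refine sum_congr rfl fun i _ => ?_
  rw [add_right_comm, Nat.choose_succ_succ', Nat.cast_add]
  ring

lemma sum_range_neg_one_pow_succ_mul_choose_succ (n : ℕ) :
    ∑ i ∈ range (n + 1), (-1 : ℚ) ^ (i + 1) * ((n + 1).choose (i + 1) : ℚ) = -1 := by
  have h := Int.alternating_sum_range_choose (n := n + 1)
  rw [sum_range_succ', if_neg n.succ_ne_zero] at h
  simp only [pow_zero, Nat.choose_zero_right, Nat.cast_one, mul_one] at h
  exact_mod_cast eq_neg_of_add_eq_zero_left h

lemma cast_choose_div_add_one (n k : ℕ) :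
    (n.choose k : ℚ) / (k + 1) = ((n + 1).choose (k + 1) : ℚ) / (n + 1) := by
  rw [div_eq_div_iff (by positivity) (by positivity)]
  exact_mod_cast (mul_comm _ _).trans (Nat.add_one_mul_choose_eq n k)

lemma sum_range_neg_one_pow_div_succ_mul_choose (n : ℕ) :
    ∑ i ∈ range (n + 1), (-1) ^ (i + 1) / (i + 1 : ℚ) * (n.choose i : ℚ) = -1 / (n + 1) := by
  calc ∑ i ∈ range (n + 1), (-1) ^ (i + 1) / (i + 1 : ℚ) * (n.choose i : ℚ)
      = (∑ i ∈ range (n + 1), (-1 : ℚ) ^ (i + 1) * ((n + 1).choose (i + 1) : ℚ)) / (n + 1) := by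
        rw [sum_div]
        refine sum_congr rfl fun i _ => ?_
        rw [mul_div_assoc, ← cast_choose_div_add_one, mul_div_assoc', div_mul_eq_mul_div]
    _ = -1 / (n + 1) := by rw [sum_range_neg_one_pow_succ_mul_choose_succ]

lemma altChooseSum_succ_zero (n : ℕ) :
    altChooseSum (n + 1) 0 = altChooseSum n 0 - 1 / (n + 1) := by
  rw [altChooseSum_succ]
  simp only [add_zero, sum_range_neg_one_pow_div_succ_mul_choose]
  ring

lemma altChooseSum_succ_succ (n k : ℕ) :
    altChooseSum (n + 1) (k + 1) = altChooseSum n (k + 1) + altChooseSum n k := by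
  have hlast : n.choose (n + (k + 1)) = 0 := Nat.choose_eq_zero_of_lt (by omega)
  rw [altChooseSum_succ, sum_range_succ, hlast, Nat.cast_zero, mul_zero, add_zero,
    altChooseSum_eq_sum_range n k]
  simp only [add_comm 1 k, add_assoc]

theorem altChooseSum_eq (n k : ℕ) :
    altChooseSum n k = -(n.choose k : ℚ) * (harmonic n - harmonic k) := by
  induction n generalizing k with
  | zero => cases k <;> simp [altChooseSum]
  | succ n ih =>
    cases k with
    | zero =>
      rw [altChooseSum_succ_zero, ih, harmonic_succ]
      push_cast
      simp only [Nat.choose_zero_right, Nat.cast_one, harmonic_zero]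
      ring
    | succ k =>
      have hpascal : ((n + 1).choose (k + 1) : ℚ) = n.choose k + n.choose (k + 1) := by
        rw [Nat.choose_succ_succ]; push_cast; ring
      rw [altChooseSum_succ_succ, ih, ih, harmonic_succ, harmonic_succ]
      push_cast
      linear_combination
        (harmonic n - harmonic k - 1 / (k + 1 : ℚ)) * hpascal - cast_choose_div_add_one n k

theorem sum_range_neg_one_pow_mul_choose_pow_of_odd {n : ℕ} (hn : Odd n) (r : ℕ) :
    ∑ k ∈ range (n + 1), (-1 : ℚ) ^ k * (n.choose k : ℚ) ^ r = 0 := by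
  have hreflect := sum_range_reflect (fun k => (-1 : ℚ) ^ k * (n.choose k : ℚ) ^ r) (n + 1)
  have hterm : ∀ k ∈ range (n + 1),
      (-1 : ℚ) ^ (n + 1 - 1 - k) * (n.choose (n + 1 - 1 - k) : ℚ) ^ r
        = -((-1 : ℚ) ^ k * (n.choose k : ℚ) ^ r) := by
    intro k hk
    have hkn : k ≤ n := Nat.lt_succ_iff.mp (mem_range.mp hk)
    have hsign : (-1 : ℚ) ^ (n - k) * (-1) ^ k = -1 := by
      rw [← pow_add, Nat.sub_add_cancel hkn, hn.neg_one_pow]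
    have hsq : ((-1 : ℚ) ^ k) ^ 2 = 1 := by
      rw [← pow_mul, mul_comm, pow_mul, neg_one_sq, one_pow]
    rw [Nat.add_sub_cancel, Nat.choose_symm hkn]
    linear_combination ((-1 : ℚ) ^ k * (n.choose k : ℚ) ^ r) * hsign
      - (-1 : ℚ) ^ (n - k) * (n.choose k : ℚ) ^ r * hsq
  rw [sum_congr rfl hterm, sum_neg_distrib] at hreflect
  linarith

theorem stmt6_general (p : ℕ) (hodd : Odd p) :
    ∑ m ∈ Finset.Icc 1 p, ∑ k ∈ Finset.range (p+1),
        (-1 : ℚ)^(m+k) * (1 / (m : ℚ)) * (p.choose k : ℚ)^2 * (p.choose (m + k) : ℚ)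
      = ∑ k ∈ Finset.range (p+1), (-1 : ℚ)^k * (p.choose k : ℚ)^3 * harmonic k := by
  calc _ = ∑ k ∈ range (p + 1), (-1 : ℚ) ^ k * (p.choose k : ℚ) ^ 2 * altChooseSum p k := by
        rw [sum_comm]
        refine sum_congr rfl fun k _ => ?_
        rw [altChooseSum, mul_sum]
        refine sum_congr rfl fun m _ => ?_
        ring
    _ = ∑ k ∈ range (p + 1), ((-1 : ℚ) ^ k * (p.choose k : ℚ) ^ 3 * harmonic k
          - harmonic p * ((-1 : ℚ) ^ k * (p.choose k : ℚ) ^ 3)) := by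
        refine sum_congr rfl fun k _ => ?_
        rw [altChooseSum_eq]
        ring
    _ = _ := by
        rw [sum_sub_distrib, ← mul_sum, sum_range_neg_one_pow_mul_choose_pow_of_odd hodd, mul_zero,
          sub_zero]

theorem stmt6 (p : ℕ) (hodd : Odd p) (hp : 0 < p) :
    ∑ m ∈ Finset.Icc 1 p, ∑ k ∈ Finset.range (p+1),
        (-1 : ℚ)^(m+k) * (1 / (m : ℚ)) * (p.choose k : ℚ)^2 * (p.choose (m + k) : ℚ)
      = ∑ k ∈ Finset.range (p+1), (-1 : ℚ)^k * (p.choose k : ℚ)^3 * harmonic k :=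
  stmt6_general p hodd
end

section
/- Dyson's constant term identity for three variables: for every positive integer m, the constant term (coefficient of x1^0 x2^0 x3^0) of (1 - x1/x2)^m (1 - x2/x1)^m (1 - x1/x3)^m (1 - x3/x1)^m (1 - x2/x3)^m (1 - x3/x2)^m equals (3m)! / (m!)^3. -/
open Finset

namespace Dyson3

/-- Integer-indexed binomial coefficient, zero outside `0 ≤ k ≤ n`. -/
def ch (n k : ℤ) : ℚ := if 0 ≤ k ∧ k ≤ n then (n.toNat.choose k.toNat : ℚ) else 0

lemma ch_eq_choose (n k : ℕ) (h : k ≤ n) : ch n k = n.choose k := by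
  simp [ch, h]

lemma ch_eq_zero_left {n k : ℤ} (h : k < 0) : ch n k = 0 := by
  rw [ch, if_neg (by omega)]

lemma ch_eq_zero_right {n k : ℤ} (h : n < k) : ch n k = 0 := by
  rw [ch, if_neg (by omega)]

lemma ch_pascal (n : ℕ) (k : ℤ) : ch (n + 1 : ℕ) k = ch n k + ch n (k - 1) := by
  rcases lt_trichotomy k 0 with h | h | h
  · rw [ch_eq_zero_left h, ch_eq_zero_left h, ch_eq_zero_left (by omega)]; ring
  · subst h
    rw [ch_eq_zero_left (by norm_num : (0:ℤ) - 1 < 0)]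
    have h1 : ch (n + 1 : ℕ) ((0:ℕ):ℤ) = ((n+1).choose 0 : ℚ) :=
      ch_eq_choose (n+1) 0 (by omega)
    have h2 : ch (n : ℕ) ((0:ℕ):ℤ) = (n.choose 0 : ℚ) := ch_eq_choose n 0 (by omega)
    push_cast at h1 h2 ⊢
    rw [h1, h2]; simp
  · obtain ⟨j, rfl⟩ : ∃ j : ℕ, k = (j : ℤ) + 1 := ⟨(k - 1).toNat, by omega⟩
    have e2 : ((j:ℤ) + 1) - 1 = ((j:ℕ):ℤ) := by ring
    rw [e2]
    rcases lt_or_ge (n : ℤ) (j : ℤ) with h2 | h2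
    · rw [ch_eq_zero_right (by push_cast; omega), ch_eq_zero_right (by omega),
        ch_eq_zero_right (by omega)]; ring
    · have hj : j ≤ n := by omega
      have e1 : ((j:ℤ) + 1) = ((j + 1 : ℕ) : ℤ) := by push_cast; ring
      rw [e1]
      rcases lt_or_ge n (j+1) with h3 | h3
      · have hjn : j = n := by omega
        subst hjn
        rw [ch_eq_choose (j+1) (j+1) le_rfl,
          ch_eq_zero_right (by exact_mod_cast h3 : (j:ℤ) < ((j+1:ℕ):ℤ)),
          ch_eq_choose j j le_rfl]
        simp
      · rw [ch_eq_choose (n+1) (j+1) (by omega), ch_eq_choose n (j+1) h3,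
          ch_eq_choose n j hj, Nat.choose_succ_succ n j]
        push_cast; ring

end Dyson3

namespace Dyson3

/-- The Dixon term. -/
noncomputable def tm (a b c : ℕ) (k : ℤ) : ℚ :=
  (-1 : ℚ) ^ k * ch (b + c : ℕ) ((b : ℤ) + k) * ch (c + a : ℕ) ((c : ℤ) + k)
    * ch (a + b : ℕ) ((a : ℤ) + k)

lemma tm_eq_zero_of_lt {a b c : ℕ} {k : ℤ} (h : k < -(a : ℤ)) : tm a b c k = 0 := by
  rw [tm, ch_eq_zero_left (by push_cast; omega : (a : ℤ) + k < 0)]; ring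

lemma tm_eq_zero_of_gt {a b c : ℕ} {k : ℤ} (h : (a : ℤ) < k) : tm a b c k = 0 := by
  rw [tm, ch_eq_zero_right (by push_cast; omega : ((c + a : ℕ) : ℤ) < (c : ℤ) + k)]; ring

/-- Partial Dixon sum over a window `[-M, M]`. -/
noncomputable def S (a b c : ℕ) : ℚ := ∑ k ∈ Finset.Icc (-(a : ℤ)) (a : ℤ), tm a b c k

lemma S_eq_window (a b c M : ℕ) (hM : a ≤ M) :
    S a b c = ∑ k ∈ Finset.Icc (-(M : ℤ)) (M : ℤ), tm a b c k := by
  rw [S]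
  apply Finset.sum_subset
  · intro x hx
    simp only [Finset.mem_Icc] at hx ⊢
    omega
  · intro x hx hx2
    simp only [Finset.mem_Icc] at hx hx2
    rcases lt_or_ge x (-(a:ℤ)) with h | h
    · exact tm_eq_zero_of_lt h
    · exact tm_eq_zero_of_gt (by omega)

lemma sum_Icc_int (M : ℕ) (F : ℤ → ℚ) :
    ∑ k ∈ Finset.Icc (-(M : ℤ)) (M : ℤ), F k
      = ∑ j ∈ Finset.range (2 * M + 1), F ((j : ℤ) - M) := by
  refine Finset.sum_nbij' (fun k => (k + M).toNat) (fun j => (j : ℤ) - M) ?_ ?_ ?_ ?_ ?_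
  · intro k hk; simp only [Finset.mem_Icc] at hk; simp only [Finset.mem_range]; omega
  · intro j hj; simp only [Finset.mem_range] at hj; simp only [Finset.mem_Icc]; omega
  · intro k hk; simp only [Finset.mem_Icc] at hk; omega
  · intro j hj; simp only [Finset.mem_range] at hj; omega
  · intro k hk; simp only [Finset.mem_Icc] at hk; congr 1; omega

lemma telescope (M : ℕ) (G : ℤ → ℚ) :
    ∑ k ∈ Finset.Icc (-(M : ℤ)) (M : ℤ), (G (k + 1) - G k) = G ((M : ℤ) + 1) - G (-(M : ℤ)) := by
  rw [sum_Icc_int]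
  have := Finset.sum_range_sub (fun j => G ((j : ℤ) - M)) (2 * M + 1)
  have h2 : ∀ j ∈ Finset.range (2 * M + 1),
      G ((j : ℤ) - M + 1) - G ((j : ℤ) - M) = G (((j+1 : ℕ) : ℤ) - M) - G ((j : ℤ) - M) := by
    intro j _; congr 2; push_cast; ring
  rw [Finset.sum_congr rfl h2, this]
  congr 2 <;> push_cast <;> ring

end Dyson3

namespace Dyson3

noncomputable def G (a b c : ℕ) (k : ℤ) : ℚ :=
  -((-1 : ℚ) ^ k) * ch (b + c + 1 : ℕ) ((b : ℤ) + k) * ch (c + a + 1 : ℕ) ((c : ℤ) + k)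
    * ch (a + b + 1 : ℕ) ((a : ℤ) + k)

lemma G_eq_zero_low {a b c : ℕ} {k : ℤ} (h : k < -(a : ℤ)) : G a b c k = 0 := by
  rw [G, ch_eq_zero_left (by omega : (a : ℤ) + k < 0)]; ring

lemma G_eq_zero_high {a b c : ℕ} {k : ℤ} (h : (a : ℤ) + 1 < k) : G a b c k = 0 := by
  rw [G, ch_eq_zero_right (by push_cast; omega : ((c + a + 1 : ℕ) : ℤ) < (c : ℤ) + k)]
  ring

lemma key (a b c : ℕ) (k : ℤ) :
    tm (a+1) (b+1) (c+1) k - tm a (b+1) (c+1) k - tm (a+1) b (c+1) k - tm (a+1) (b+1) c k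
      = G a b c (k+1) - G a b c k := by
  have p1 := ch_pascal (b + c + 1) ((b : ℤ) + k + 1)
  have p2 := ch_pascal (c + a + 1) ((c : ℤ) + k + 1)
  have p3 := ch_pascal (a + b + 1) ((a : ℤ) + k + 1)
  simp only [tm, G]
  push_cast at p1 p2 p3 ⊢
  ring_nf at p1 p2 p3 ⊢
  rw [p1, p2, p3]
  have hz : ((-1:ℚ)) ^ (1 + k) = -((-1:ℚ)) ^ k := by
    rw [zpow_add₀ (by norm_num : (-1:ℚ) ≠ 0)]; simp
  rw [hz]
  ring

lemma S_rec (a b c : ℕ) :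
    S (a+1) (b+1) (c+1) = S a (b+1) (c+1) + S (a+1) b (c+1) + S (a+1) (b+1) c := by
  set M := a + b + c + 3 with hM
  have h1 := S_eq_window (a+1) (b+1) (c+1) M (by omega)
  have h2 := S_eq_window a (b+1) (c+1) M (by omega)
  have h3 := S_eq_window (a+1) b (c+1) M (by omega)
  have h4 := S_eq_window (a+1) (b+1) c M (by omega)
  have key' : ∑ k ∈ Finset.Icc (-(M:ℤ)) (M:ℤ),
      (tm (a+1) (b+1) (c+1) k - tm a (b+1) (c+1) k - tm (a+1) b (c+1) k
        - tm (a+1) (b+1) c k)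
      = ∑ k ∈ Finset.Icc (-(M:ℤ)) (M:ℤ), (G a b c (k+1) - G a b c k) :=
    Finset.sum_congr rfl fun k _ => key a b c k
  have g1 : G a b c ((M:ℤ)+1) = 0 := G_eq_zero_high (by simp only [hM]; push_cast; omega)
  have g2 : G a b c (-(M:ℤ)) = 0 := G_eq_zero_low (by simp only [hM]; push_cast; omega)
  rw [telescope, g1, g2] at key'
  simp only [Finset.sum_sub_distrib] at key'
  rw [h1, h2, h3, h4]
  linarith [key']

lemma S_base (a b : ℕ) : S a b 0 = ch ((a + b : ℕ) : ℤ) (a : ℤ) := by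
  rw [S, Finset.sum_eq_single_of_mem 0 (by simp)]
  · rw [tm]
    have e1 : ch (b : ℤ) (b : ℤ) = 1 := by simpa using ch_eq_choose b b le_rfl
    have e2 : ch (a : ℤ) (0 : ℤ) = 1 := by simpa using ch_eq_choose a 0 (Nat.zero_le a)
    norm_num
    rw [e1, e2]; ring
  · intro k hk hk0
    rcases lt_or_ge k 0 with h | h
    · rw [tm, ch_eq_zero_left (by push_cast; omega : ((0:ℕ):ℤ) + k < 0)]; ring
    · rw [tm, ch_eq_zero_right (by push_cast; omega : ((b + 0 : ℕ):ℤ) < (b:ℤ) + k)]; ring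

lemma S_cyc (a b c : ℕ) : S a b c = S b c a := by
  rw [S_eq_window a b c (a+b) (by omega), S_eq_window b c a (a+b) (by omega)]
  refine Finset.sum_congr rfl fun k _ => ?_
  rw [tm, tm]; ring

end Dyson3

namespace Dyson3

lemma ch_mult (a b : ℕ) : ch ((a + b : ℕ) : ℤ) (a : ℤ)
    = ((a + b).factorial : ℚ) / (a.factorial * b.factorial) := by
  rw [ch_eq_choose (a + b) a (by omega), Nat.cast_choose ℚ (by omega : a ≤ a + b),
    Nat.add_sub_cancel_left]

lemma mrec (a b c : ℕ) :
    ((a+b+c+3).factorial : ℚ) / ((a+1).factorial * (b+1).factorial * (c+1).factorial)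
      = ((a+b+c+2).factorial : ℚ) / (a.factorial * (b+1).factorial * (c+1).factorial)
      + ((a+b+c+2).factorial : ℚ) / ((a+1).factorial * b.factorial * (c+1).factorial)
      + ((a+b+c+2).factorial : ℚ) / ((a+1).factorial * (b+1).factorial * c.factorial) := by
  have h3 : (a+b+c+3).factorial = (a+b+c+3) * (a+b+c+2).factorial := by
    rw [show a+b+c+3 = (a+b+c+2)+1 by ring, Nat.factorial_succ]
  have ha : (a+1).factorial = (a+1) * a.factorial := Nat.factorial_succ a
  have hb : (b+1).factorial = (b+1) * b.factorial := Nat.factorial_succ b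
  have hc : (c+1).factorial = (c+1) * c.factorial := Nat.factorial_succ c
  rw [h3, ha, hb, hc]
  have fa : (a.factorial : ℚ) ≠ 0 := by positivity
  have fb : (b.factorial : ℚ) ≠ 0 := by positivity
  have fc : (c.factorial : ℚ) ≠ 0 := by positivity
  have na : ((a:ℚ)+1) ≠ 0 := by positivity
  have nb : ((b:ℚ)+1) ≠ 0 := by positivity
  have nc : ((c:ℚ)+1) ≠ 0 := by positivity
  push_cast
  field_simp
  ring

lemma S_eq_multinomial (n : ℕ) : ∀ a b c : ℕ, a + b + c = n →
    S a b c = ((a+b+c).factorial : ℚ) / (a.factorial * b.factorial * c.factorial) := by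
  induction n using Nat.strong_induction_on with
  | _ n ih =>
    intro a b c hn
    rcases c with _ | c
    · rw [S_base, ch_mult, Nat.add_zero, Nat.factorial_zero]
      push_cast; ring
    · rcases a with _ | a
      · rw [S_cyc, S_base, ch_mult, Nat.zero_add, Nat.factorial_zero]
        push_cast; ring
      · rcases b with _ | b
        · rw [S_cyc, S_cyc, S_base, ch_mult, Nat.factorial_zero,
            show (a+1)+0+(c+1) = (c+1)+(a+1) by ring]
          push_cast; ring
        · rw [S_rec,
            ih (a+(b+1)+(c+1)) (by omega) a (b+1) (c+1) rfl,
            ih ((a+1)+b+(c+1)) (by omega) (a+1) b (c+1) rfl,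
            ih ((a+1)+(b+1)+c) (by omega) (a+1) (b+1) c rfl,
            show a+(b+1)+(c+1) = a+b+c+2 by ring,
            show (a+1)+b+(c+1) = a+b+c+2 by ring,
            show (a+1)+(b+1)+c = a+b+c+2 by ring,
            show (a+1)+(b+1)+(c+1) = a+b+c+3 by ring]
          exact (mrec a b c).symm

end Dyson3

namespace Dyson3

open MvPolynomial

lemma pow_sub_expand (i j : Fin 3) (n : ℕ) :
    ((X i - X j : MvPolynomial (Fin 3) ℚ)) ^ n
      = ∑ t ∈ Finset.range (n+1),
          monomial (Finsupp.single i t + Finsupp.single j (n-t))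
            ((-1:ℚ)^(t+n) * (n.choose t : ℚ)) := by
  rw [sub_pow]
  refine Finset.sum_congr rfl fun t _ => ?_
  rw [X_pow_eq_monomial, X_pow_eq_monomial,
    show ((-1 : MvPolynomial (Fin 3) ℚ))^(t+n) = C ((-1:ℚ)^(t+n)) by simp,
    show ((n.choose t : ℕ) : MvPolynomial (Fin 3) ℚ) = C ((n.choose t : ℚ)) by simp,
    C_mul_monomial, monomial_mul, mul_comm _ (C ((n.choose t : ℚ))), C_mul_monomial]
  congr 1
  ring

noncomputable def mono3 (n t u v : ℕ) : Fin 3 →₀ ℕ :=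
  Finsupp.single 0 t + Finsupp.single 1 (n-t) + (Finsupp.single 0 u + Finsupp.single 2 (n-u))
    + (Finsupp.single 1 v + Finsupp.single 2 (n-v))

lemma triple_expand (n : ℕ) :
    ((X 0 - X 1) * (X 0 - X 2) * (X 1 - X 2) : MvPolynomial (Fin 3) ℚ) ^ n
      = ∑ t ∈ Finset.range (n+1), ∑ u ∈ Finset.range (n+1), ∑ v ∈ Finset.range (n+1),
          monomial (mono3 n t u v)
            (((-1:ℚ)^(t+n) * (n.choose t : ℚ)) * ((-1:ℚ)^(u+n) * (n.choose u : ℚ))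
              * ((-1:ℚ)^(v+n) * (n.choose v : ℚ))) := by
  rw [mul_pow, mul_pow, pow_sub_expand 0 1 n, pow_sub_expand 0 2 n, pow_sub_expand 1 2 n,
    Finset.sum_mul_sum, Finset.sum_mul]
  refine Finset.sum_congr rfl fun t _ => ?_
  rw [Finset.sum_mul]
  refine Finset.sum_congr rfl fun u _ => ?_
  rw [Finset.mul_sum]
  refine Finset.sum_congr rfl fun v _ => ?_
  rw [monomial_mul, monomial_mul, mono3]

lemma mono3_coords {n t u v : ℕ}
    (h : mono3 n t u v
      = Finsupp.single (0:Fin 3) n + Finsupp.single 1 n + Finsupp.single 2 n) :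
    t + u = n ∧ (n - t) + v = n := by
  constructor
  · have h0 := DFunLike.congr_fun h (0 : Fin 3)
    simpa [mono3, Finsupp.single_apply] using h0
  · have h1 := DFunLike.congr_fun h (1 : Fin 3)
    simpa [mono3, Finsupp.single_apply] using h1

lemma mono3_eq {n t : ℕ} (ht : t ≤ n) :
    mono3 n t (n-t) t
      = Finsupp.single (0:Fin 3) n + Finsupp.single 1 n + Finsupp.single 2 n := by
  ext x
  fin_cases x <;> simp [mono3, Finsupp.single_apply] <;> omega

lemma coeff_triple (n : ℕ) :
    MvPolynomial.coeff
        (Finsupp.single (0:Fin 3) n + Finsupp.single 1 n + Finsupp.single 2 n)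
        (((X 0 - X 1) * (X 0 - X 2) * (X 1 - X 2) : MvPolynomial (Fin 3) ℚ) ^ n)
      = ∑ t ∈ Finset.range (n+1), (-1:ℚ)^t * ((n.choose t : ℚ))^3 := by
  rw [triple_expand n]
  simp only [MvPolynomial.coeff_sum, MvPolynomial.coeff_monomial]
  refine Finset.sum_congr rfl fun t ht => ?_
  rw [Finset.mem_range] at ht
  have ht' : t ≤ n := by omega
  rw [Finset.sum_eq_single_of_mem (n - t) (Finset.mem_range.2 (by omega))]
  · rw [Finset.sum_eq_single_of_mem t (Finset.mem_range.2 (by omega))]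
    · rw [if_pos (mono3_eq ht')]
      rw [Nat.choose_symm ht']
      have hs : (-1:ℚ)^(t+n) * (-1:ℚ)^((n-t)+n) * (-1:ℚ)^(t+n) = (-1:ℚ)^t := by
        rw [← pow_add, ← pow_add, show t+n+((n-t)+n)+(t+n) = 4*n + t by omega,
          pow_add, pow_mul]
        norm_num
      calc (-1:ℚ)^(t+n) * (n.choose t : ℚ) * ((-1:ℚ)^((n-t)+n) * (n.choose t : ℚ))
            * ((-1:ℚ)^(t+n) * (n.choose t : ℚ))
          = ((-1:ℚ)^(t+n) * (-1:ℚ)^((n-t)+n) * (-1:ℚ)^(t+n)) * (n.choose t : ℚ)^3 := by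
            ring
        _ = (-1:ℚ)^t * (n.choose t : ℚ)^3 := by rw [hs]
    · intro v hv hvt
      rw [Finset.mem_range] at hv
      rw [if_neg]
      intro hcon
      have := mono3_coords hcon
      omega
  · intro u hu hut
    rw [Finset.mem_range] at hu
    refine Finset.sum_eq_zero fun v hv => ?_
    rw [if_neg]
    intro hcon
    have := mono3_coords hcon
    omega

lemma neg_one_pow_inv (m : ℕ) : ((-1:ℚ)^m)⁻¹ = (-1:ℚ)^m := by
  rcases Nat.even_or_odd m with h | h
  · simp [h.neg_one_pow]
  · simp [h.neg_one_pow] <;> norm_num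

lemma zpow_sub_nat (m j : ℕ) : ((-1:ℚ)) ^ ((j:ℤ) - (m:ℤ)) = (-1:ℚ)^j * (-1:ℚ)^m := by
  rw [zpow_sub₀ (by norm_num : (-1:ℚ) ≠ 0), zpow_natCast, zpow_natCast, div_eq_mul_inv]
  rw [neg_one_pow_inv]

lemma S_diag (m : ℕ) :
    S m m m = (-1:ℚ)^m * ∑ t ∈ Finset.range (2*m+1), (-1:ℚ)^t * (((2*m).choose t : ℚ))^3 := by
  rw [S, sum_Icc_int, Finset.mul_sum]
  refine Finset.sum_congr rfl fun j hj => ?_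
  rw [Finset.mem_range] at hj
  rw [tm]
  have e : (m:ℤ) + ((j:ℤ) - (m:ℤ)) = ((j:ℕ) : ℤ) := by ring
  rw [e]
  have hch : ch ((m+m : ℕ) : ℤ) ((j:ℕ):ℤ) = ((2*m).choose j : ℚ) := by
    rw [ch_eq_choose (m+m) j (by omega), show m+m = 2*m by omega]
  rw [hch, zpow_sub_nat]
  ring

end Dyson3

open MvPolynomial in
/-- Dyson's constant term identity for three variables: the constant term of
`∏_{i ≠ j} (1 - x_i/x_j)^m` equals `(3m)!/(m!)^3`.  Since
`∏_{i<j} (1 - x_i/x_j)^m (1 - x_j/x_i)^m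
  = (-1)^{3m} ((x1-x2)(x1-x3)(x2-x3))^{2m} / (x1 x2 x3)^{2m}`,
this constant term is `(-1)^m` times the coefficient of `(x1 x2 x3)^{2m}` in
`((x1-x2)(x1-x3)(x2-x3))^{2m}`. -/
theorem stmt10 (m : ℕ) (hm : 0 < m) :
    (-1 : ℚ)^m *
      MvPolynomial.coeff
        (Finsupp.single (0 : Fin 3) (2*m) + Finsupp.single 1 (2*m) +
          Finsupp.single 2 (2*m))
        (((X 0 - X 1) * (X 0 - X 2) * (X 1 - X 2))^(2*m) : MvPolynomial (Fin 3) ℚ)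
      = (Nat.factorial (3*m) : ℚ) / (Nat.factorial m : ℚ)^3 := by
  rw [Dyson3.coeff_triple (2*m), ← Dyson3.S_diag m,
    Dyson3.S_eq_multinomial (m+m+m) m m m rfl, show m+m+m = 3*m by omega,
    show ((m.factorial : ℚ))^3 = m.factorial * m.factorial * m.factorial by ring]
end
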